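/- If an ordered set partition π of [n] word-avoids the pattern 132, then for each i, max(B_i) > max(B_{i+1}) if and only if min(B_i) > max(B_{i+1}); i.e., maxdes(π) = pdes(π) for every 132-word-avoiding ordered set partition. -/

import Mathlib

/-- The word of an ordered set partition: concatenate the blocks,
listing the elements of each block in increasing order. -/
def word (π : List (Finset ℕ)) : List ℕ :=
  (π.map (fun B => B.sort (· ≤ ·))).flatten

/-- `π` is an ordered set partition of `[n] = {1,…,n}`: a list of nonempty,
pairwise disjoint finsets whose union is `{1,…,n}`. -/
def IsOSP (n : ℕ) (π : List (Finset ℕ)) : Prop :=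
  (∀ B ∈ π, B.Nonempty) ∧ π.Pairwise Disjoint ∧
    π.foldr (· ∪ ·) ∅ = Finset.Icc 1 n

noncomputable def minB (B : Finset ℕ) : ℕ := sInf (B : Set ℕ)
def maxB (B : Finset ℕ) : ℕ := B.sup id

/-- number of descents of a word -/
def desCount (w : List ℕ) : ℕ :=
  ((List.range (w.length - 1)).filter (fun i => w.getD (i + 1) 0 < w.getD i 0)).length

noncomputable def mindes (π : List (Finset ℕ)) : ℕ :=
  ((List.range (π.length - 1)).filter
    (fun i => minB (π.getD (i + 1) ∅) < minB (π.getD i ∅))).length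

def maxdes (π : List (Finset ℕ)) : ℕ :=
  ((List.range (π.length - 1)).filter
    (fun i => maxB (π.getD (i + 1) ∅) < maxB (π.getD i ∅))).length

noncomputable def pdes (π : List (Finset ℕ)) : ℕ :=
  ((List.range (π.length - 1)).filter
    (fun i => maxB (π.getD (i + 1) ∅) < minB (π.getD i ∅))).length

def Avoids12 (w : List ℕ) : Prop :=
  ¬ ∃ i j : ℕ, i < j ∧ j < w.length ∧ w.getD i 0 < w.getD j 0

def Avoids21 (w : List ℕ) : Prop :=
  ¬ ∃ i j : ℕ, i < j ∧ j < w.length ∧ w.getD j 0 < w.getD i 0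

def Avoids123 (w : List ℕ) : Prop :=
  ¬ ∃ i j k : ℕ, i < j ∧ j < k ∧ k < w.length ∧
    w.getD i 0 < w.getD j 0 ∧ w.getD j 0 < w.getD k 0

def Avoids132 (w : List ℕ) : Prop :=
  ¬ ∃ i j k : ℕ, i < j ∧ j < k ∧ k < w.length ∧
    w.getD i 0 < w.getD k 0 ∧ w.getD k 0 < w.getD j 0

def Avoids213 (w : List ℕ) : Prop :=
  ¬ ∃ i j k : ℕ, i < j ∧ j < k ∧ k < w.length ∧
    w.getD j 0 < w.getD i 0 ∧ w.getD i 0 < w.getD k 0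

def Avoids312 (w : List ℕ) : Prop :=
  ¬ ∃ i j k : ℕ, i < j ∧ j < k ∧ k < w.length ∧
    w.getD j 0 < w.getD k 0 ∧ w.getD k 0 < w.getD i 0

def Avoids321 (w : List ℕ) : Prop :=
  ¬ ∃ i j k : ℕ, i < j ∧ j < k ∧ k < w.length ∧
    w.getD k 0 < w.getD j 0 ∧ w.getD j 0 < w.getD i 0

/-- reverse-complement of an ordered set partition of `[n]` -/
def rcomp (n : ℕ) (π : List (Finset ℕ)) : List (Finset ℕ) :=
  (π.map (fun B => B.image (fun a => n + 1 - a))).reverse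

/-! If `max B_{i+1} < max B_i` but not `max B_{i+1} < min B_i`, then disjointness forces
`min B_i < max B_{i+1} < max B_i`, and these three values occur in the word in the order
`min B_i, max B_i, max B_{i+1}`: a `132` pattern. The converse holds because `min B_i ≤ max B_i`. -/

open List

lemma minB_eq_min' {B : Finset ℕ} (hB : B.Nonempty) : minB B = B.min' hB :=
  le_antisymm (Nat.sInf_le (B.min'_mem hB))
    (B.min'_le _ (Nat.sInf_mem (Finset.coe_nonempty.mpr hB)))

lemma maxB_eq_max' {B : Finset ℕ} (hB : B.Nonempty) : maxB B = B.max' hB := by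
  rw [maxB, Finset.max'_eq_sup', Finset.sup'_eq_sup]

lemma Avoids132.not_of_sublist {w : List ℕ} (hw : Avoids132 w) {a b c : ℕ}
    (habc : [a, b, c] <+ w) : ¬ (a < c ∧ c < b) := by
  rintro ⟨hac, hcb⟩
  obtain ⟨f, hf⟩ := List.sublist_iff_exists_fin_orderEmbedding_get_eq.mp habc
  have h01 : (f 0 : ℕ) < f 1 := f.strictMono (show (0 : Fin 3) < 1 by decide)
  have h12 : (f 1 : ℕ) < f 2 := f.strictMono (show (1 : Fin 3) < 2 by decide)
  have hget : ∀ k, w.getD (f k) 0 = [a, b, c].get k := fun k => by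
    rw [hf k, List.getD_eq_getElem _ _ (f k).isLt, List.get_eq_getElem]
  exact hw ⟨f 0, f 1, f 2, h01, h12, (f 2).isLt, by
    rw [hget, hget]; exact hac, by rw [hget, hget]; exact hcb⟩

lemma Finset.pair_sublist_sort {α : Type*} [LinearOrder α] {s : Finset α} {a b : α}
    (ha : a ∈ s) (hb : b ∈ s) (hab : a < b) : [a, b] <+ s.sort (· ≤ ·) :=
  List.sublist_of_subperm_of_pairwise
    (List.subperm_of_subset (by simpa using hab.ne) (by simp [ha, hb]))
    (by simpa using hab.le) (s.pairwise_sort _)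

lemma List.pair_getElem_infix {α : Type*} (l : List α) (i : ℕ) (hi : i + 1 < l.length) :
    [l[i], l[i + 1]] <:+: l := by
  refine ⟨l.take i, l.drop (i + 2), ?_⟩
  conv_rhs => rw [← List.take_append_drop i l, List.drop_eq_getElem_cons (by omega),
    List.drop_eq_getElem_cons hi]
  simp

lemma sort_append_sort_infix_word (π : List (Finset ℕ)) (i : ℕ) (hi : i + 1 < π.length) :
    π[i].sort (· ≤ ·) ++ π[i + 1].sort (· ≤ ·) <:+: word π := by
  simpa [word] using ((List.pair_getElem_infix π i hi).map (fun B => B.sort (· ≤ ·))).flatten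

lemma maxB_lt_maxB_iff_lt_minB {B C : Finset ℕ} {w : List ℕ} (hB : B.Nonempty)
    (hC : C.Nonempty) (hBC : Disjoint B C) (hw : Avoids132 w)
    (hsub : B.sort (· ≤ ·) ++ C.sort (· ≤ ·) <+ w) :
    maxB C < maxB B ↔ maxB C < minB B := by
  rw [minB_eq_min' hB, maxB_eq_max' hB, maxB_eq_max' hC]
  refine ⟨fun hlt => ?_, fun hlt => hlt.trans_le (B.min'_le_max' hB)⟩
  by_contra! hle
  have hne : B.min' hB ≠ C.max' hC := fun he =>
    Finset.disjoint_left.mp hBC (B.min'_mem hB) (he ▸ C.max'_mem hC)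
  have hmin_lt : B.min' hB < C.max' hC := hle.lt_of_ne hne
  have hpattern : [B.min' hB, B.max' hB, C.max' hC] <+ w :=
    ((Finset.pair_sublist_sort (B.min'_mem hB) (B.max'_mem hB) (hmin_lt.trans hlt)).append
      (List.singleton_sublist.mpr (Finset.mem_sort _ |>.mpr (C.max'_mem hC)))).trans hsub
  exact hw.not_of_sublist hpattern ⟨hmin_lt, hlt⟩

theorem stmt7 (n : ℕ) (π : List (Finset ℕ)) (h : IsOSP n π)
    (ha : Avoids132 (word π)) :
    (∀ i : ℕ, i + 1 < π.length →
      (maxB (π.getD (i + 1) ∅) < maxB (π.getD i ∅) ↔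
        maxB (π.getD (i + 1) ∅) < minB (π.getD i ∅))) ∧
    maxdes π = pdes π := by
  obtain ⟨hne, hdisj, -⟩ := h
  have key : ∀ i : ℕ, i + 1 < π.length →
      (maxB (π.getD (i + 1) ∅) < maxB (π.getD i ∅) ↔
        maxB (π.getD (i + 1) ∅) < minB (π.getD i ∅)) := fun i hi => by
    rw [List.getD_eq_getElem _ _ hi, List.getD_eq_getElem _ _ (by omega)]
    exact maxB_lt_maxB_iff_lt_minB (hne _ (List.getElem_mem _)) (hne _ (List.getElem_mem _))
      (List.pairwise_iff_getElem.mp hdisj i (i + 1) _ hi (by omega)) ha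
      (sort_append_sort_infix_word π i hi).sublist
  refine ⟨key, ?_⟩
  unfold maxdes pdes
  congr 1
  refine List.filter_congr fun i hi => ?_
  rw [decide_eq_decide]
  exact key i (by rw [List.mem_range] at hi; omega)
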